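/- arXiv:1606.01782 — 7 statements merged into one kernel-verified Lean document; each statement's English description precedes it below -/
import Mathlib

section
/- Let p = (p_1, p_2, p_3) be a probability vector with p_1, p_2 ≤ 1/2 and p_1 + p_2 ≥ 1/2, and let p_3 = 1 − p_1 − p_2. Then the 2 × 2 matrix Γ with entries Γ_{11} = (p_1 − p_3)² − 1 + 2(p_1 + p_3), Γ_{22} = (p_2 − p_3)² − 1 + 2(p_2 + p_3), Γ_{12} = Γ_{21} = (p_1 − p_3)(p_2 − p_3) − 1/2 + 2p_3, is positive semidefinite. In particular, det Γ = 18(p_1 − 1/2)(p_2 − 1/2)(p_1 + p_2 − 1/2) ≥ 0. -/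
/-- Theorem 1: for a probability vector `(p₁,p₂,p₃)` with `p₁,p₂ ≤ 1/2` and
`p₁ + p₂ ≥ 1/2`, the 2×2 matrix `Γ` is positive semidefinite; in particular
its determinant equals `18(p₁-1/2)(p₂-1/2)(p₁+p₂-1/2) ≥ 0`. -/
theorem stmt_3 (p₁ p₂ p₃ : ℝ)
    (h₁ : 0 ≤ p₁) (h₂ : 0 ≤ p₂) (h₃ : 0 ≤ p₃)
    (hsum : p₁ + p₂ + p₃ = 1)
    (hle₁ : p₁ ≤ 1 / 2) (hle₂ : p₂ ≤ 1 / 2) (hge : 1 / 2 ≤ p₁ + p₂)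
    (Γ : Matrix (Fin 2) (Fin 2) ℝ)
    (hΓ : Γ = !![(p₁ - p₃)^2 - 1 + 2*(p₁ + p₃), (p₁ - p₃)*(p₂ - p₃) - 1/2 + 2*p₃;
                 (p₁ - p₃)*(p₂ - p₃) - 1/2 + 2*p₃, (p₂ - p₃)^2 - 1 + 2*(p₂ + p₃)]) :
    Γ.PosSemidef ∧
      Γ.det = 18 * (p₁ - 1/2) * (p₂ - 1/2) * (p₁ + p₂ - 1/2) ∧ 0 ≤ Γ.det := by
  have hp3 : p₃ = 1 - p₁ - p₂ := by linarith
  set A : ℝ := (p₁ - p₃)^2 - 1 + 2*(p₁ + p₃) with hA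
  set B : ℝ := (p₂ - p₃)^2 - 1 + 2*(p₂ + p₃) with hB
  set C : ℝ := (p₁ - p₃)*(p₂ - p₃) - 1/2 + 2*p₃ with hC
  clear_value A B C
  have hdet : Γ.det = 18 * (p₁ - 1/2) * (p₂ - 1/2) * (p₁ + p₂ - 1/2) := by
    rw [hΓ, Matrix.det_fin_two_of, hA, hB, hC, hp3]; ring
  have hdetnn : (0:ℝ) ≤ 18 * (p₁ - 1/2) * (p₂ - 1/2) * (p₁ + p₂ - 1/2) := by
    nlinarith [mul_nonneg (mul_nonneg (by linarith : (0:ℝ) ≤ 1/2 - p₁)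
      (by linarith : (0:ℝ) ≤ 1/2 - p₂)) (by linarith : (0:ℝ) ≤ p₁ + p₂ - 1/2)]
  have hD : (0:ℝ) ≤ A * B - C^2 := by
    have : A * B - C^2 = 18 * (p₁ - 1/2) * (p₂ - 1/2) * (p₁ + p₂ - 1/2) := by
      rw [hA, hB, hC, hp3]; ring
    linarith
  have htr : (0:ℝ) < A + B := by
    rw [hA, hB, hp3]; nlinarith [sq_nonneg (2*p₁ + p₂ - 1), sq_nonneg (p₁ + 2*p₂ - 1)]
  refine ⟨Matrix.posSemidef_iff_dotProduct_mulVec.mpr ⟨?_, ?_⟩, hdet, hdet ▸ hdetnn⟩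
  · rw [hΓ]
    ext i j
    fin_cases i <;> fin_cases j <;>
      simp [Matrix.conjTranspose, Matrix.vecHead, Matrix.vecTail]
  · intro x
    have hx : x = ![x 0, x 1] := by ext i; fin_cases i <;> simp
    rw [hΓ, hx]
    simp [Matrix.mulVec, dotProduct, Fin.sum_univ_two]
    set a := x 0
    set b := x 1
    have key : (A + B) * (a * (A * a + C * b) + b * (C * a + B * b)) =
        (A*a + C*b)^2 + (C*a + B*b)^2 + (A*B - C^2) * (a^2 + b^2) := by ring
    nlinarith [sq_nonneg (A*a + C*b), sq_nonneg (C*a + B*b),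
      mul_nonneg hD (by positivity : (0:ℝ) ≤ a^2 + b^2), htr]
end

section
/- Let N > 3 and let p = (p_1,...,p_N) be a probability vector whose two smallest entries sum to at least (3N−2)/(2N(N−1)). Then the (N−1)×(N−1) matrix Γ(p) with entries Γ_{ii} = (p_i − p_N)² − 2/((N−1)(N−2)) + 2(p_i + p_N)/(N−2) and Γ_{ij} = (p_i − p_N)(p_j − p_N) − 1/((N−1)(N−2)) + 2p_N/(N−2) for i ≠ j (indices 1 ≤ i, j ≤ N−1) is positive semidefinite. -/
open Finset in
lemma aux_nonneg (N : ℕ) (hN : 3 < N) (b : Fin N → ℝ)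
    (hpair : ∀ u v : Fin N, u ≠ v → 1/((N:ℝ)*((N:ℝ)-1)) ≤ b u + b v)
    (hlow : ∀ u, -(1/((N:ℝ)*((N:ℝ)-1)*((N:ℝ)-2))) ≤ b u)
    (y : Fin N → ℝ) (hy : ∑ u, y u = 0) :
    0 ≤ ∑ u, b u * y u ^ 2 := by
  have hA : (4:ℝ) ≤ (N:ℝ) := by exact_mod_cast hN
  by_cases hall : ∀ u, 0 ≤ b u
  · exact Finset.sum_nonneg fun u _ => mul_nonneg (hall u) (sq_nonneg _)
  push_neg at hall
  obtain ⟨k, hk⟩ := hall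
  have hsplit : ∑ u ∈ univ.erase k, b u * y u ^ 2 + b k * y k ^ 2 = ∑ u, b u * y u ^ 2 :=
    Finset.sum_erase_add _ _ (mem_univ k)
  have hyk : y k = -∑ u ∈ univ.erase k, y u := by
    have h := Finset.sum_erase_add univ y (mem_univ k)
    rw [hy] at h; linarith
  have hcard : (#(univ.erase k) : ℝ) = (N:ℝ) - 1 := by
    rw [Finset.card_erase_of_mem (mem_univ k), Finset.card_univ, Fintype.card_fin]
    have : 1 ≤ N := by omega
    push_cast [this]
    ring
  have hCS : y k ^ 2 ≤ ((N:ℝ)-1) * ∑ u ∈ univ.erase k, y u ^ 2 := by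
    rw [hyk, neg_sq]
    calc (∑ u ∈ univ.erase k, y u)^2 ≤ (#(univ.erase k) : ℝ) * ∑ u ∈ univ.erase k, y u ^ 2 :=
          sq_sum_le_card_mul_sum_sq
      _ = _ := by rw [hcard]
  have hcoef : ∀ u ∈ univ.erase k, 0 ≤ b u + ((N:ℝ)-1) * b k := by
    intro u hu
    have h1 := hpair u k (Finset.ne_of_mem_erase hu)
    have h2 := hlow k
    have hN0 : (N:ℝ) ≠ 0 := by linarith
    have hN1 : (N:ℝ)-1 ≠ 0 := by linarith
    have hN2 : (N:ℝ)-2 ≠ 0 := by linarith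
    have e1 : ((N:ℝ)-2) * (1/((N:ℝ)*((N:ℝ)-1)*((N:ℝ)-2))) = 1/((N:ℝ)*((N:ℝ)-1)) := by
      field_simp
    have h3 := mul_le_mul_of_nonneg_left h2 (by linarith : (0:ℝ) ≤ (N:ℝ)-2)
    have e2 : b u + ((N:ℝ)-1) * b k = (b u + b k) + ((N:ℝ)-2) * b k := by ring
    rw [e2]
    have e3 : ((N:ℝ)-2) * -(1/((N:ℝ)*((N:ℝ)-1)*((N:ℝ)-2))) = -(1/((N:ℝ)*((N:ℝ)-1))) := by
      rw [mul_neg, e1]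
    linarith [h3, e3]
  calc (0:ℝ) ≤ ∑ u ∈ univ.erase k, (b u + ((N:ℝ)-1)*b k) * y u ^ 2 :=
        Finset.sum_nonneg fun u hu => mul_nonneg (hcoef u hu) (sq_nonneg _)
    _ = ∑ u ∈ univ.erase k, b u * y u ^ 2 + b k * (((N:ℝ)-1) * ∑ u ∈ univ.erase k, y u ^ 2) := by
        simp only [add_mul]
        rw [Finset.sum_add_distrib]
        congr 1
        simp only [Finset.mul_sum]
        exact Finset.sum_congr rfl fun u _ => by ring
    _ ≤ ∑ u ∈ univ.erase k, b u * y u ^ 2 + b k * y k ^ 2 := by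
        have := mul_le_mul_of_nonpos_left hCS (le_of_lt hk)
        linarith
    _ = ∑ u, b u * y u ^ 2 := hsplit

lemma split_last (N : ℕ) (hN : 0 < N) (f : Fin N → ℝ) (l : Fin N) (hl : (l:ℕ) = N - 1) :
    ∑ u, f u = ∑ i : Fin (N-1), f (Fin.castLE (Nat.sub_le N 1) i) + f l := by
  obtain ⟨k, rfl⟩ : ∃ k, N = k + 1 := ⟨N - 1, by omega⟩
  have h1 : l = Fin.last k := Fin.ext (by simpa using hl)
  rw [Fin.sum_univ_castSucc, h1]
  rfl



/-- Theorem 2: if `N > 3` and the two smallest entries of the probability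
vector `p` sum to at least `(3N-2)/(2N(N-1))` (equivalently, every pair of
distinct entries does), then the reduced matrix `Γ(p)` is positive
semidefinite. -/
theorem stmt_5 (N : ℕ) (hN : 3 < N) (p : Fin N → ℝ)
    (hp0 : ∀ u, 0 ≤ p u) (hp1 : ∑ u, p u = 1)
    (hmin : ∀ u v : Fin N, u ≠ v →
      (3 * (N : ℝ) - 2) / (2 * (N : ℝ) * ((N : ℝ) - 1)) ≤ p u + p v)
    (Γ : Matrix (Fin (N - 1)) (Fin (N - 1)) ℝ)
    (hΓ : ∀ i j : Fin (N - 1),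
      Γ i j =
        (p (Fin.castLE (Nat.sub_le N 1) i) - p ⟨N - 1, by omega⟩) *
          (p (Fin.castLE (Nat.sub_le N 1) j) - p ⟨N - 1, by omega⟩)
        + (if i = j
            then -2 / (((N : ℝ) - 1) * ((N : ℝ) - 2))
              + 2 * (p (Fin.castLE (Nat.sub_le N 1) i) + p ⟨N - 1, by omega⟩) / ((N : ℝ) - 2)
            else -1 / (((N : ℝ) - 1) * ((N : ℝ) - 2))
              + 2 * p ⟨N - 1, by omega⟩ / ((N : ℝ) - 2))) :
    Γ.PosSemidef := by
  have hA : (4:ℝ) ≤ (N:ℝ) := by exact_mod_cast hN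
  have hN0 : (N:ℝ) ≠ 0 := by linarith
  have hN1 : (N:ℝ)-1 ≠ 0 := by linarith
  have hN2 : (N:ℝ)-2 ≠ 0 := by linarith
  -- notation
  set l : Fin N := ⟨N - 1, by omega⟩ with hldef
  set E : Fin (N-1) → Fin N := Fin.castLE (Nat.sub_le N 1) with hEdef
  set bb : Fin N → ℝ := fun u => 2 * p u / ((N:ℝ)-2) - 1/(((N:ℝ)-1)*((N:ℝ)-2)) with hbbdef
  -- pointwise lower bound on p
  have hpmin : ∀ u, 1/(2*(N:ℝ)) ≤ p u := by
    intro u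
    have hs : ∑ _v ∈ Finset.univ.erase u, ((3*(N:ℝ)-2)/(2*(N:ℝ)*((N:ℝ)-1)))
        ≤ ∑ v ∈ Finset.univ.erase u, (p u + p v) :=
      Finset.sum_le_sum fun v hv => hmin u v (Finset.ne_of_mem_erase hv).symm
    have hcard : ((Finset.univ.erase u).card : ℝ) = (N:ℝ) - 1 := by
      rw [Finset.card_erase_of_mem (Finset.mem_univ u), Finset.card_univ, Fintype.card_fin]
      have : 1 ≤ N := by omega
      push_cast [this]; ring
    have herase : ∑ v ∈ Finset.univ.erase u, p v = 1 - p u := by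
      have h := Finset.sum_erase_add Finset.univ p (Finset.mem_univ u)
      rw [hp1] at h; linarith
    rw [Finset.sum_const, Finset.sum_add_distrib, Finset.sum_const, herase,
      nsmul_eq_mul, nsmul_eq_mul, hcard] at hs
    rw [div_le_iff₀ (by linarith : (0:ℝ) < 2*(N:ℝ))]
    have e1 : ((N:ℝ)-1) * ((3*(N:ℝ)-2)/(2*(N:ℝ)*((N:ℝ)-1))) = (3*(N:ℝ)-2)/(2*(N:ℝ)) := by
      field_simp
    rw [e1, div_le_iff₀ (by linarith : (0:ℝ) < 2*(N:ℝ))] at hs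
    nlinarith [hs]
  -- lower bound on bb
  have hblow : ∀ u, -(1/((N:ℝ)*((N:ℝ)-1)*((N:ℝ)-2))) ≤ bb u := by
    intro u
    have h := hpmin u
    have key : bb u = 2 * p u / ((N:ℝ)-2) - 1/(((N:ℝ)-1)*((N:ℝ)-2)) := rfl
    have e1 : -(1/((N:ℝ)*((N:ℝ)-1)*((N:ℝ)-2)))
        = 2 * (1/(2*(N:ℝ))) / ((N:ℝ)-2) - 1/(((N:ℝ)-1)*((N:ℝ)-2)) := by
      field_simp; ring
    rw [key, e1]
    have h2 : 2 * (1/(2*(N:ℝ))) / ((N:ℝ)-2) ≤ 2 * p u / ((N:ℝ)-2) := by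
      gcongr
      linarith
    linarith
  -- pair bound on bb
  have hbpair : ∀ u v : Fin N, u ≠ v → 1/((N:ℝ)*((N:ℝ)-1)) ≤ bb u + bb v := by
    intro u v huv
    have h := hmin u v huv
    have key : bb u + bb v
        = 2*(p u + p v)/((N:ℝ)-2) - 2/(((N:ℝ)-1)*((N:ℝ)-2)) := by
      show (2 * p u / ((N:ℝ)-2) - 1/(((N:ℝ)-1)*((N:ℝ)-2)))
        + (2 * p v / ((N:ℝ)-2) - 1/(((N:ℝ)-1)*((N:ℝ)-2))) = _
      ring
    have e1 : 1/((N:ℝ)*((N:ℝ)-1))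
        = 2*((3*(N:ℝ)-2)/(2*(N:ℝ)*((N:ℝ)-1)))/((N:ℝ)-2) - 2/(((N:ℝ)-1)*((N:ℝ)-2)) := by
      field_simp; ring
    rw [key, e1]
    have h2 : 2*((3*(N:ℝ)-2)/(2*(N:ℝ)*((N:ℝ)-1)))/((N:ℝ)-2) ≤ 2*(p u + p v)/((N:ℝ)-2) := by
      gcongr
      linarith
    linarith
  -- canonical form of Γ
  have hΓ' : ∀ i j, Γ i j = (p (E i) - p l) * (p (E j) - p l)
      + (bb l + if i = j then bb (E i) else 0) := by
    intro i j
    rw [hΓ i j]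
    rcases eq_or_ne i j with rfl | h
    · rw [if_pos rfl, if_pos rfl]
      simp only [hbbdef]; ring
    · rw [if_neg h, if_neg h]
      simp only [hbbdef]; ring
  refine Matrix.PosSemidef.of_dotProduct_mulVec_nonneg ?_ fun x => ?_
  · -- Hermitian
    ext i j
    simp only [Matrix.conjTranspose_apply, star_trivial]
    rw [hΓ' j i, hΓ' i j]
    rcases eq_or_ne i j with rfl | h
    · ring
    · rw [if_neg h, if_neg (Ne.symm h)]
      ring
  · -- quadratic form
    set s : ℝ := ∑ i, x i with hsdef
    set T : ℝ := ∑ i, (p (E i) - p l) * x i with hTdef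
    have hQ : dotProduct (star x) (Γ.mulVec x) = ∑ i, ∑ j, x i * Γ i j * x j := by
      simp [dotProduct, Matrix.mulVec, Finset.mul_sum, mul_assoc]
    have hrow : ∀ i, ∑ j, Γ i j * x j = (p (E i) - p l) * T + (bb l * s + bb (E i) * x i) := by
      intro i
      calc ∑ j, Γ i j * x j
          = ∑ j, (((p (E i) - p l) * ((p (E j) - p l) * x j) + bb l * x j)
              + (if i = j then bb (E j) * x j else 0)) := by
            refine Finset.sum_congr rfl fun j _ => ?_
            rw [hΓ' i j]
            rcases eq_or_ne i j with rfl | h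
            · rw [if_pos rfl, if_pos rfl]; ring
            · rw [if_neg h, if_neg h]; ring
        _ = ((p (E i) - p l) * T + bb l * s) + bb (E i) * x i := by
            rw [Finset.sum_add_distrib, Finset.sum_add_distrib, ← Finset.mul_sum,
              ← Finset.mul_sum, Finset.sum_ite_eq, if_pos (Finset.mem_univ i),
              ← hTdef, ← hsdef]
        _ = _ := by ring
    have key : ∑ i, ∑ j, x i * Γ i j * x j = T^2 + (∑ i, bb (E i) * x i^2 + bb l * s^2) := by
      calc ∑ i, ∑ j, x i * Γ i j * x j
          = ∑ i, x i * ∑ j, Γ i j * x j := by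
            refine Finset.sum_congr rfl fun i _ => ?_
            rw [Finset.mul_sum]
            exact Finset.sum_congr rfl fun j _ => by ring
        _ = ∑ i, ((((p (E i) - p l) * x i) * T + x i * (bb l * s)) + bb (E i) * x i^2) := by
            refine Finset.sum_congr rfl fun i _ => ?_
            rw [hrow i]; ring
        _ = ((∑ i, (p (E i) - p l) * x i) * T + (∑ i, x i) * (bb l * s))
              + ∑ i, bb (E i) * x i^2 := by
            rw [Finset.sum_add_distrib, Finset.sum_add_distrib, ← Finset.sum_mul,
              ← Finset.sum_mul]
        _ = T^2 + (∑ i, bb (E i) * x i^2 + bb l * s^2) := by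
            rw [← hTdef, ← hsdef]; ring
    -- the auxiliary sum-zero vector
    set y : Fin N → ℝ := fun u => if h : (u:ℕ) < N-1 then x ⟨u.1, h⟩ else -s with hydef
    have hye : ∀ i : Fin (N-1), y (E i) = x i := by
      intro i
      have hlt : ((E i : Fin N) : ℕ) < N - 1 := i.isLt
      simp only [hydef]
      rw [dif_pos hlt]
      exact congrArg x (Fin.ext (by simp [hEdef]))
    have hyl : y l = -s := by
      simp only [hydef]
      rw [dif_neg]
      simp [hldef]
    have hy0 : ∑ u, y u = 0 := by
      have h0 : ∑ u, y u = ∑ i : Fin (N-1), y (E i) + y l :=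
        split_last N (by omega) y l (by simp [hldef])
      rw [h0, hyl]
      have h1 : ∑ i : Fin (N-1), y (E i) = ∑ i, x i :=
        Finset.sum_congr rfl fun i _ => hye i
      rw [h1, ← hsdef]
      ring
    have hsum_y : ∑ u, bb u * y u ^ 2 = ∑ i, bb (E i) * x i^2 + bb l * s^2 := by
      have h0 : ∑ u, bb u * y u ^ 2 = ∑ i : Fin (N-1), bb (E i) * y (E i) ^ 2 + bb l * y l ^ 2 :=
        split_last N (by omega) (fun u => bb u * y u ^ 2) l (by simp [hldef])
      rw [h0, hyl]
      congr 1
      · exact Finset.sum_congr rfl fun i _ => by rw [hye i]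
      · ring
    have hnn := aux_nonneg N hN bb hbpair hblow y hy0
    rw [hsum_y] at hnn
    show (0:ℝ) ≤ dotProduct (star x) (Γ.mulVec x)
    rw [hQ, key]
    nlinarith [sq_nonneg T]
end

section
/- Let 2 ≤ n < N, let p = (p_1,...,p_N) with ∑ p_i = 1, and set Q(F) = Ã_{N,n} + B̃_{N,n} ∑_{j∈F} p_j for n-element subsets F of {1,...,N}, with Ã_{N,n} = −(n−1)/C(N−1,n) and B̃_{N,n} = n/C(N−2,n−1). Then for each fixed i ∈ {1,...,N}, ∑_{F : |F| = n, i ∈ F} Q(F) = n·p_i. -/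
open Finset

lemma count_subset {α : Type*} [DecidableEq α] (s t : Finset α) (ht : t ⊆ s) (k : ℕ)
    (htk : t.card ≤ k) :
    ((s.powersetCard k).filter (fun F => t ⊆ F)).card
      = (s.card - t.card).choose (k - t.card) := by
  rw [← Finset.card_sdiff_of_subset ht, ← Finset.card_powersetCard (s := s \ t)]
  apply Finset.card_bij' (fun F _ => F \ t) (fun G _ => G ∪ t)
  · intro F hF
    simp only [mem_filter, Finset.mem_powersetCard] at hF
    rw [Finset.mem_powersetCard]
    exact ⟨Finset.sdiff_subset_sdiff hF.1.1 le_rfl,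
      by rw [Finset.card_sdiff_of_subset hF.2, hF.1.2]⟩
  · intro G hG
    rw [Finset.mem_powersetCard] at hG
    have hdisj : Disjoint G t := Finset.disjoint_of_subset_left hG.1 Finset.sdiff_disjoint
    simp only [mem_filter, Finset.mem_powersetCard]
    refine ⟨⟨Finset.union_subset (hG.1.trans Finset.sdiff_subset) ht, ?_⟩, Finset.subset_union_right⟩
    rw [Finset.card_union_of_disjoint hdisj, hG.2]
    omega
  · intro F hF
    simp only [mem_filter] at hF
    exact Finset.sdiff_union_of_subset hF.2
  · intro G hG
    rw [Finset.mem_powersetCard] at hG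
    exact Finset.union_sdiff_cancel_right (Finset.disjoint_of_subset_left hG.1 Finset.sdiff_disjoint)

/-- Part (c) of Theorem 3: for each fixed `i`,
`∑_{|F| = n, i ∈ F} Q(F) = n · p i`, where
`Q(F) = Ã_{N,n} + B̃_{N,n} ∑_{j∈F} p j`, `Ã_{N,n} = -(n-1)/C(N-1,n)` and
`B̃_{N,n} = n/C(N-2,n-1)`. -/
theorem stmt_12 (N n : ℕ) (h2 : 2 ≤ n) (hn : n < N)
    (p : Fin N → ℝ) (hp1 : ∑ u, p u = 1) (i : Fin N) :
    ∑ F ∈ (Finset.univ.powersetCard n (α := Fin N)).filter (fun F => i ∈ F),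
      (-(((n : ℝ) - 1) / ((N - 1).choose n))
        + ((n : ℝ) / ((N - 2).choose (n - 1))) * ∑ j ∈ F, p j) = n * p i := by
  set S := (Finset.univ.powersetCard n (α := Fin N)).filter (fun F => i ∈ F) with hS
  -- cardinality of S
  have hcardS : S.card = (N - 1).choose (n - 1) := by
    have : S = (Finset.univ.powersetCard n (α := Fin N)).filter
        (fun F => ({i} : Finset (Fin N)) ⊆ F) := by
      simp [hS, Finset.singleton_subset_iff]
    rw [this, count_subset _ _ (by simp) _ (by simpa using (by omega : 1 ≤ n))]
    simp
  -- count of F containing both i and j (j ≠ i)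
  have hpair : ∀ j : Fin N, j ≠ i →
      (S.filter (fun F => j ∈ F)).card = (N - 2).choose (n - 2) := by
    intro j hj
    have : S.filter (fun F => j ∈ F) = (Finset.univ.powersetCard n (α := Fin N)).filter
        (fun F => ({i, j} : Finset (Fin N)) ⊆ F) := by
      rw [hS, Finset.filter_filter]
      apply Finset.filter_congr
      intro F _
      simp [Finset.insert_subset_iff]
    rw [this, count_subset _ _ (by simp) _ ?_]
    · rw [Finset.card_univ, Fintype.card_fin, Finset.card_pair (Ne.symm hj)]
    · rw [Finset.card_pair (Ne.symm hj)]; exact h2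
  -- swap sums
  have hswap : ∑ F ∈ S, ∑ j ∈ F, p j
      = ∑ j, ((S.filter (fun F => j ∈ F)).card : ℝ) * p j := by
    calc ∑ F ∈ S, ∑ j ∈ F, p j
        = ∑ F ∈ S, ∑ j ∈ Finset.univ, if j ∈ F then p j else 0 := by
          refine Finset.sum_congr rfl fun F _ => ?_
          rw [Finset.sum_ite_mem, Finset.univ_inter]
      _ = ∑ j, ∑ F ∈ S, if j ∈ F then p j else 0 := Finset.sum_comm
      _ = ∑ j, ((S.filter (fun F => j ∈ F)).card : ℝ) * p j := by
          refine Finset.sum_congr rfl fun j _ => ?_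
          rw [Finset.sum_ite, Finset.sum_const_zero, add_zero, Finset.sum_const,
            nsmul_eq_mul]
  have hsum_erase : ∑ j ∈ Finset.univ.erase i, p j = 1 - p i := by
    have := Finset.sum_erase_add Finset.univ p (Finset.mem_univ i)
    rw [hp1] at this; linarith
  have hlin : ∑ F ∈ S, ∑ j ∈ F, p j
      = ((N - 2).choose (n - 2) : ℝ) * (1 - p i) + ((N - 1).choose (n - 1) : ℝ) * p i := by
    rw [hswap, ← Finset.sum_erase_add _ _ (Finset.mem_univ i)]
    have : ∀ j ∈ Finset.univ.erase i,
        ((S.filter (fun F => j ∈ F)).card : ℝ) * p j = ((N - 2).choose (n - 2) : ℝ) * p j := by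
      intro j hj
      rw [hpair j (Finset.ne_of_mem_erase hj)]
    rw [Finset.sum_congr rfl this, ← Finset.mul_sum, hsum_erase]
    have : S.filter (fun F => i ∈ F) = S := by
      apply Finset.filter_true_of_mem
      intro F hF
      exact (Finset.mem_filter.mp hF).2
    rw [this, hcardS]
  -- expand the main sum
  rw [Finset.sum_add_distrib, Finset.sum_const, ← Finset.mul_sum, hlin, hcardS,
    nsmul_eq_mul]
  -- arithmetic
  have hc1 : 0 < (N - 1).choose n := Nat.choose_pos (by omega)
  have hc2 : 0 < (N - 2).choose (n - 1) := Nat.choose_pos (by omega)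
  have hc1' : ((N - 1).choose n : ℝ) ≠ 0 := by positivity
  have hc2' : ((N - 2).choose (n - 1) : ℝ) ≠ 0 := by positivity
  -- key nat identities
  obtain ⟨l, rfl⟩ : ∃ l, n = l + 2 := ⟨n - 2, by omega⟩
  obtain ⟨m, rfl⟩ : ∃ m, N = l + m + 3 := ⟨N - l - 3, by omega⟩
  simp only [show l + m + 3 - 1 = l + m + 2 by omega, show l + m + 3 - 2 = l + m + 1 by omega,
    show l + 2 - 1 = l + 1 by omega, show l + 2 - 2 = l by omega] at *
  set q := p i with hq
  set a := ((l + m + 2).choose (l + 1) : ℝ) with ha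
  set b := ((l + m + 1).choose (l + 1) : ℝ) with hb
  set c := ((l + m + 1).choose l : ℝ) with hc
  set d := ((l + m + 2).choose (l + 2) : ℝ) with hd
  have h1 := Nat.add_one_mul_choose_eq (l + 1 + m) l
  have h2 := Nat.add_one_mul_choose_eq (l + 1 + m) (l + 1)
  simp only [Nat.succ_eq_add_one, show l + 1 + m + 1 = l + m + 2 by omega,
    show l + 1 + m = l + m + 1 by omega] at h1 h2
  have h1' : ((l : ℝ) + m + 2) * c = a * (l + 1) := by
    rw [hc, ha]; exact_mod_cast h1
  have h2' : ((l : ℝ) + m + 2) * b = d * (l + 2) := by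
    rw [hb, hd]; exact_mod_cast h2
  have hm : ((l : ℝ) + m + 2) ≠ 0 := by positivity
  have key : ((l : ℝ) + 1) * a * b = ((l : ℝ) + 2) * c * d :=
    mul_left_cancel₀ hm (by linear_combination ((l : ℝ) + 1) * a * h2' - ((l : ℝ) + 2) * d * h1')
  have pascalN : (l + m + 2).choose (l + 1) = (l + m + 1).choose (l + 1) + (l + m + 1).choose l :=
    (Nat.choose_succ_succ (l + m + 1) l).trans (Nat.add_comm _ _)
  have pascal : a = b + c := by rw [ha, hb, hc]; exact_mod_cast pascalN
  push_cast
  field_simp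
  linear_combination (-1 : ℝ) * key + ((l : ℝ) + 2) * d * q * pascal
end

section
/- Let 3 ≤ k ≤ n < N, let A_{N,k} = −(k−1)(N−k−1)!/(N−1)!, B_{N,k} = (N−k−1)!/(N−2)!, and let p = (p_1,...,p_N) be a probability vector. Then for any distinct u_1,...,u_{k−1} ∈ {1,...,N}, ∑_{u_k ∉ {u_1,...,u_{k−1}}} (A_{N,k} + B_{N,k}(p_{u_1} + ... + p_{u_k})) = A_{N,k−1} + B_{N,k−1}(p_{u_1} + ... + p_{u_{k−1}}). -/
/-- Marginalization identity from the proof of Theorem 3: for distinct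
`u 1, …, u (k-1)`, summing `A_{N,k} + B_{N,k}(p_{u₁}+⋯+p_{u_{k-1}}+p_v)` over
`v` outside `{u₁,…,u_{k-1}}` yields
`A_{N,k-1} + B_{N,k-1}(p_{u₁}+⋯+p_{u_{k-1}})`. -/
theorem stmt_13 (N n k : ℕ) (h3 : 3 ≤ k) (hkn : k ≤ n) (hn : n < N)
    (A B : ℕ → ℝ)
    (hA : ∀ j, A j = -(((j : ℝ) - 1) * (Nat.factorial (N - j - 1))) / Nat.factorial (N - 1))
    (hB : ∀ j, B j = (Nat.factorial (N - j - 1) : ℝ) / Nat.factorial (N - 2))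
    (p : Fin N → ℝ) (hp0 : ∀ u, 0 ≤ p u) (hp1 : ∑ u, p u = 1)
    (u : Fin (k - 1) → Fin N) (hu : Function.Injective u) :
    ∑ v ∈ Finset.univ \ Finset.image u Finset.univ,
        (A k + B k * ((∑ j, p (u j)) + p v))
      = A (k - 1) + B (k - 1) * ∑ j, p (u j) := by
  have hkN : k < N := lt_of_le_of_lt hkn hn
  set S := Finset.image u Finset.univ with hS
  set T := ∑ j, p (u j) with hT
  have hcardS : S.card = k - 1 := by
    rw [hS, Finset.card_image_of_injective _ hu, Finset.card_univ, Fintype.card_fin]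
  have hcard : (Finset.univ \ S).card = N - (k - 1) := by
    rw [Finset.card_sdiff_of_subset (Finset.subset_univ _), Finset.card_univ, Fintype.card_fin, hcardS]
  have hSsum : ∑ v ∈ S, p v = T := by
    rw [hS, Finset.sum_image (fun a _ b _ h => hu h)]
  have hsump : ∑ v ∈ Finset.univ \ S, p v = 1 - T := by
    have h := Finset.sum_sdiff (f := p) (Finset.subset_univ S)
    rw [hp1, hSsum] at h
    linarith
  have lhs : ∑ v ∈ Finset.univ \ S, (A k + B k * (T + p v))
      = (N - (k-1) : ℕ) * (A k + B k * T) + B k * (1 - T) := by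
    have : ∀ v, A k + B k * (T + p v) = (A k + B k * T) + B k * p v := by
      intro v; ring
    simp_rw [this]
    rw [Finset.sum_add_distrib, Finset.sum_const, ← Finset.mul_sum, hsump, hcard,
      nsmul_eq_mul]
  rw [lhs, hA, hA, hB, hB]
  -- casts and factorial relations
  have h1 : ((N - (k-1) : ℕ) : ℝ) = (N : ℝ) - (k : ℝ) + 1 := by
    have : N - (k-1) = N - k + 1 := by omega
    rw [this]; push_cast [Nat.le_of_lt hkN]; ring
  have hNk1 : N - (k-1) - 1 = N - k := by omega
  have hfNk : (Nat.factorial (N - k) : ℝ) = ((N:ℝ) - k) * Nat.factorial (N - k - 1) := by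
    have h2 : N - k = (N - k - 1) + 1 := by omega
    rw [h2, Nat.factorial_succ]
    push_cast
    have hc : ((N - k - 1 : ℕ) : ℝ) = (N:ℝ) - k - 1 := by
      have h' : N - k - 1 = N - (k+1) := by omega
      rw [h']; push_cast [show k+1 ≤ N by omega]; ring
    rw [hc]; ring
  have hfN1 : (Nat.factorial (N - 1) : ℝ) = ((N:ℝ) - 1) * Nat.factorial (N - 2) := by
    have h2 : N - 1 = (N - 2) + 1 := by omega
    rw [h2, Nat.factorial_succ]
    push_cast
    have : ((N - 2 : ℕ) : ℝ) = (N:ℝ) - 2 := by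
      push_cast [show 2 ≤ N by omega]; ring
    rw [this]; ring
  have hk1 : ((k - 1 : ℕ) : ℝ) = (k : ℝ) - 1 := by
    push_cast [show 1 ≤ k by omega]; ring
  rw [hNk1, hfNk, hfN1, hk1, h1]
  have hf2 : (Nat.factorial (N - 2) : ℝ) ≠ 0 := Nat.cast_ne_zero.mpr (Nat.factorial_ne_zero _)
  have hN1 : (N : ℝ) - 1 ≠ 0 := by
    have : 2 ≤ N := by omega
    have : (2:ℝ) ≤ N := by exact_mod_cast this
    linarith
  field_simp
  ring
end

section
/- Let 2 ≤ n < N and let p ∈ ℝ^N satisfy ∑_{i=1}^N p_i = 1 and ∑_{i∈F} p_i ≥ (n−1)/(N−1) for every subset F ⊆ {1,...,N} of size n. Then p_i ≥ 0 for all i. -/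
open Finset

lemma card_filter_mem {α : Type*} [DecidableEq α] (s : Finset α) (k : ℕ) (j : α) (hj : j ∈ s) :
    ((s.powersetCard (k+1)).filter (fun A => j ∈ A)).card = (s.erase j).card.choose k := by
  rw [← Finset.card_powersetCard]
  apply Finset.card_bij' (fun A _ => A.erase j) (fun B _ => insert j B)
  · intro A hA
    simp only [mem_filter] at hA
    exact Finset.insert_erase hA.2
  · intro B hB
    rw [Finset.mem_powersetCard] at hB
    have hjB : j ∉ B := fun h => (Finset.mem_erase.mp (hB.1 h)).1 rfl
    exact Finset.erase_insert hjB
  · intro A hA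
    simp only [mem_filter, Finset.mem_powersetCard] at hA
    rw [Finset.mem_powersetCard]
    refine ⟨Finset.erase_subset_erase j hA.1.1, ?_⟩
    rw [Finset.card_erase_of_mem hA.2, hA.1.2]
    omega

  · intro B hB
    rw [Finset.mem_powersetCard] at hB
    have hjB : j ∉ B := fun h => (Finset.mem_erase.mp (hB.1 h)).1 rfl
    simp only [mem_filter, Finset.mem_powersetCard]
    refine ⟨⟨?_, ?_⟩, Finset.mem_insert_self _ _⟩
    · exact Finset.insert_subset hj (hB.1.trans (Finset.erase_subset _ _))
    · rw [Finset.card_insert_of_notMem hjB, hB.2]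

lemma sum_powersetCard_sum {α : Type*} [DecidableEq α] (s : Finset α) (k : ℕ) (f : α → ℝ) :
    ∑ A ∈ s.powersetCard (k+1), ∑ j ∈ A, f j
      = ((s.card - 1).choose k : ℝ) * ∑ j ∈ s, f j := by
  calc ∑ A ∈ s.powersetCard (k+1), ∑ j ∈ A, f j
      = ∑ A ∈ s.powersetCard (k+1), ∑ j ∈ s, if j ∈ A then f j else 0 := by
        apply Finset.sum_congr rfl
        intro A hA
        rw [Finset.mem_powersetCard] at hA
        rw [Finset.sum_ite_mem, Finset.inter_eq_right.mpr hA.1]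
    _ = ∑ j ∈ s, ∑ A ∈ s.powersetCard (k+1), if j ∈ A then f j else 0 := Finset.sum_comm
    _ = ∑ j ∈ s, (((s.powersetCard (k+1)).filter (fun A => j ∈ A)).card : ℝ) * f j := by
        apply Finset.sum_congr rfl
        intro j _
        rw [← Finset.sum_filter, Finset.sum_const, nsmul_eq_mul]
    _ = ∑ j ∈ s, ((s.card - 1).choose k : ℝ) * f j := by
        apply Finset.sum_congr rfl
        intro j hj
        rw [card_filter_mem s k j hj, Finset.card_erase_of_mem hj]
    _ = ((s.card - 1).choose k : ℝ) * ∑ j ∈ s, f j := by rw [Finset.mul_sum]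

/-- From the proof of Theorem 5: the nonnegativity constraints are implied by
the equality constraint `∑ p i = 1` together with the facet inequalities
`∑_{i∈F} p i ≥ (n-1)/(N-1)` for all subsets `F` of size `n`. -/
theorem stmt_15 (N n : ℕ) (h2 : 2 ≤ n) (hn : n < N)
    (p : Fin N → ℝ) (hp1 : ∑ u, p u = 1)
    (hfacet : ∀ F : Finset (Fin N), F.card = n →
      ((n : ℝ) - 1) / ((N : ℝ) - 1) ≤ ∑ i ∈ F, p i) :
    ∀ i, 0 ≤ p i := by
  obtain ⟨m, rfl⟩ : ∃ m, n = m + 2 := ⟨n - 2, by omega⟩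
  obtain ⟨K, rfl⟩ : ∃ K, N = m + K + 3 := ⟨N - m - 3, by omega⟩
  intro i
  set u : Finset (Fin (m + K + 3)) := Finset.univ.erase i with hu
  have hucard : u.card = m + K + 2 := by
    rw [hu, Finset.card_erase_of_mem (Finset.mem_univ i), Finset.card_univ, Fintype.card_fin]
    omega
  -- sum the facet inequality over all size-(m+2) subsets containing i
  have hsum : ∑ A ∈ u.powersetCard (m+1),
      (((m:ℝ) + 2) - 1) / (((m:ℝ) + K + 3) - 1)
      ≤ ∑ A ∈ u.powersetCard (m+1), ∑ j ∈ insert i A, p j := by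
    apply Finset.sum_le_sum
    intro A hA
    rw [Finset.mem_powersetCard] at hA
    have hiA : i ∉ A := fun h => (Finset.mem_erase.mp (hA.1 h)).1 rfl
    have := hfacet (insert i A) (by rw [Finset.card_insert_of_notMem hiA, hA.2])
    push_cast at this
    convert this using 2 <;> push_cast <;> ring
  have hcardP : (u.powersetCard (m+1)).card = (m + K + 2).choose (m + 1) := by
    rw [Finset.card_powersetCard, hucard]
  have hrhs : ∑ A ∈ u.powersetCard (m+1), ∑ j ∈ insert i A, p j
      = ((m + K + 2).choose (m + 1) : ℝ) * p i
        + ((m + K + 1).choose m : ℝ) * (1 - p i) := by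
    have hterm : ∀ A ∈ u.powersetCard (m+1),
        ∑ j ∈ insert i A, p j = p i + ∑ j ∈ A, p j := by
      intro A hA
      rw [Finset.mem_powersetCard] at hA
      have hiA : i ∉ A := fun h => (Finset.mem_erase.mp (hA.1 h)).1 rfl
      exact Finset.sum_insert hiA
    rw [Finset.sum_congr rfl hterm, Finset.sum_add_distrib, Finset.sum_const, hcardP,
      nsmul_eq_mul, sum_powersetCard_sum u m p, hucard]
    have husum : ∑ j ∈ u, p j = 1 - p i := by
      rw [hu, Finset.sum_erase_eq_sub (Finset.mem_univ i), hp1]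
    rw [husum]
    norm_num
  rw [Finset.sum_const, hcardP, nsmul_eq_mul, hrhs] at hsum
  -- numerical identities
  have hDpos : (0:ℝ) < (m:ℝ) + K + 2 := by positivity
  rw [show ((m:ℝ) + 2 - 1) / ((m:ℝ) + (K:ℝ) + 3 - 1) = ((m:ℝ)+1)/((m:ℝ)+(K:ℝ)+2) from by
        ring_nf,
    mul_div_assoc', div_le_iff₀ hDpos] at hsum
  have key : (m + K + 2) * ((m + K + 1).choose m) = (m + K + 2).choose (m + 1) * (m + 1) :=
    Nat.add_one_mul_choose_eq (m + K + 1) m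
  have hsplit : (m + K + 2).choose (m + 1)
      = (m + K + 1).choose m + (m + K + 1).choose (m + 1) := Nat.choose_succ_succ' _ _
  have hpos : 0 < (m + K + 1).choose (m + 1) := Nat.choose_pos (by omega)
  have keyR : ((m:ℝ) + K + 2) * ((m + K + 1).choose m : ℝ)
      = ((m + K + 2).choose (m + 1) : ℝ) * ((m:ℝ) + 1) := by exact_mod_cast key
  have hba : ((m + K + 1).choose m : ℝ) < ((m + K + 2).choose (m + 1) : ℝ) := by
    have : (m + K + 1).choose m < (m + K + 2).choose (m + 1) := by omega
    exact_mod_cast this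
  nlinarith [hsum, keyR, mul_pos hDpos (sub_pos.mpr hba)]
end

section
/- Let N > 3 and 2 ≤ n < N, and let d = (N² + n(n−2))/((N−1)²n²) and o = (N²(N−2) − n(n−2))/((N−2)(N−1)²n²). Then the (N−1)×(N−1) matrix with diagonal entries d and off-diagonal entries o has eigenvalues d + (N−2)o = N²/((N−1)n²) (multiplicity 1) and d − o = (n−2)/((N−2)(N−1)n) (multiplicity N−2); hence it is positive semidefinite. -/
open Matrix in
/-- Theorem 6, second case: with `d = (N² + n(n-2))/((N-1)²n²)` and
`o = (N²(N-2) - n(n-2))/((N-2)(N-1)²n²)`, the `(N-1)×(N-1)` matrix with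
diagonal `d` and off-diagonal `o` has eigenvalue
`d + (N-2)o = N²/((N-1)n²)` with multiplicity 1 and
`d - o = (n-2)/((N-2)(N-1)n)` with multiplicity `N-2`; hence it is positive
semidefinite. -/
theorem stmt_17 (N n : ℕ) (hN : 3 < N) (h2 : 2 ≤ n) (hn : n < N)
    (d o : ℝ)
    (hd : d = ((N : ℝ) ^ 2 + n * ((n : ℝ) - 2)) / (((N : ℝ) - 1) ^ 2 * (n : ℝ) ^ 2))
    (ho : o = ((N : ℝ) ^ 2 * ((N : ℝ) - 2) - n * ((n : ℝ) - 2)) /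
      (((N : ℝ) - 2) * ((N : ℝ) - 1) ^ 2 * (n : ℝ) ^ 2))
    (Γ : Matrix (Fin (N - 1)) (Fin (N - 1)) ℝ)
    (hΓ : ∀ i j : Fin (N - 1), Γ i j = if i = j then d else o) :
    d + ((N : ℝ) - 2) * o = (N : ℝ) ^ 2 / (((N : ℝ) - 1) * (n : ℝ) ^ 2) ∧
    d - o = ((n : ℝ) - 2) / (((N : ℝ) - 2) * ((N : ℝ) - 1) * (n : ℝ)) ∧
    ∃ hH : Γ.IsHermitian,
      (Finset.univ.filter fun i => hH.eigenvalues i = d + ((N : ℝ) - 2) * o).card = 1 ∧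
      (Finset.univ.filter fun i => hH.eigenvalues i = d - o).card = N - 2 ∧
      Γ.PosSemidef := by
  have hNR : (3:ℝ) < N := by exact_mod_cast hN
  have hnR : (2:ℝ) ≤ n := by exact_mod_cast h2
  have hnN : (n:ℝ) < N := by exact_mod_cast hn
  have hN1 : ((N:ℝ) - 1) ≠ 0 := by linarith
  have hN2 : ((N:ℝ) - 2) ≠ 0 := by linarith
  have hn0 : (n:ℝ) ≠ 0 := by linarith
  set b := d + ((N:ℝ) - 2) * o with hbdef
  set s := d - o with hsdef
  have hb : b = (N:ℝ)^2 / (((N:ℝ)-1) * (n:ℝ)^2) := by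
    rw [hbdef, hd, ho]; field_simp; ring
  have hs : s = ((n:ℝ)-2) / (((N:ℝ)-2)*((N:ℝ)-1)*(n:ℝ)) := by
    rw [hsdef, hd, ho]; field_simp; ring
  have hN1' : (0:ℝ) < (N:ℝ) - 1 := by linarith
  have hN2' : (0:ℝ) < (N:ℝ) - 2 := by linarith
  have hn' : (0:ℝ) < (n:ℝ) := by linarith
  have hNpos : (0:ℝ) < (N:ℝ) := by linarith
  have hopos : 0 < o := by
    rw [ho]; apply div_pos
    · have h1 : (n:ℝ)^2 < (N:ℝ)^2 := by nlinarith
      have h2' : (0:ℝ) ≤ (N:ℝ)^2 * ((N:ℝ) - 3) :=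
        mul_nonneg (sq_nonneg _) (by linarith)
      nlinarith
    · exact mul_pos (mul_pos hN2' (pow_pos hN1' 2)) (pow_pos hn' 2)
  have hbpos : 0 < b := by
    rw [hb]; exact div_pos (pow_pos hNpos 2) (mul_pos hN1' (pow_pos hn' 2))
  have hsnn : 0 ≤ s := by
    rw [hs]
    exact div_nonneg (by linarith) (mul_nonneg (mul_nonneg hN2'.le hN1'.le) hn'.le)
  have hbs : b - s = ((N:ℝ)-1) * o := by rw [hbdef, hsdef]; ring
  have hbne : b ≠ s := by
    have : s < b := by nlinarith [mul_pos hN1' hopos]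
    exact (ne_of_gt this)
  have hcard : (Fintype.card (Fin (N-1)) : ℝ) = (N:ℝ) - 1 := by
    have h1 : 1 ≤ N := by omega
    simp [Nat.cast_sub h1]
  have hH : Γ.IsHermitian := by
    ext i j
    simp only [Matrix.conjTranspose_apply, hΓ, star_trivial]
    by_cases h : i = j <;> simp [h, eq_comm]
  have hA : Γ - s • (1 : Matrix (Fin (N-1)) (Fin (N-1)) ℝ) = Matrix.of (fun _ _ => o) := by
    ext i j
    simp only [Matrix.sub_apply, Matrix.smul_apply, Matrix.one_apply, hΓ, Matrix.of_apply,
      smul_eq_mul]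
    by_cases h : i = j <;> simp [h, hsdef] <;> ring
  have hcol : ∀ j, ∑ k, Γ k j = b := by
    intro j
    have h1 : ∀ k, Γ k j = o + (if k = j then d - o else 0) := by
      intro k; rw [hΓ]; by_cases h : k = j <;> simp [h]
    calc ∑ k, Γ k j = ∑ k, (o + if k = j then d - o else 0) :=
          Finset.sum_congr rfl (fun k _ => h1 k)
      _ = (Fintype.card (Fin (N-1)) : ℝ) * o + (d - o) := by
          rw [Finset.sum_add_distrib, Finset.sum_const, Finset.sum_ite_eq' Finset.univ j]
          simp [Finset.card_univ, nsmul_eq_mul]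
      _ = b := by rw [hcard, hbdef]; ring
  have hquad : (Γ - s • 1) * (Γ - b • (1 : Matrix (Fin (N-1)) (Fin (N-1)) ℝ)) = 0 := by
    ext i j
    rw [hA, Matrix.mul_apply]
    simp only [Matrix.of_apply, Matrix.sub_apply, Matrix.smul_apply, Matrix.one_apply,
      smul_eq_mul, Matrix.zero_apply]
    have h1 : ∀ k : Fin (N-1), o * (Γ k j - b * (if k = j then (1:ℝ) else 0))
        = o * Γ k j - (if k = j then o * b else 0) := by
      intro k; by_cases h : k = j <;> simp [h] <;> ring
    rw [Finset.sum_congr rfl (fun k _ => h1 k), Finset.sum_sub_distrib,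
      ← Finset.mul_sum, hcol j, Finset.sum_ite_eq' Finset.univ j]
    simp
  have hev : ∀ i, hH.eigenvalues i = b ∨ hH.eigenvalues i = s := by
    intro i
    set μ := hH.eigenvalues i with hμ
    have hv : Γ *ᵥ ⇑(hH.eigenvectorBasis i) = μ • ⇑(hH.eigenvectorBasis i) :=
      hH.mulVec_eigenvectorBasis i
    set v := ⇑(hH.eigenvectorBasis i) with hvdef
    have hv0 : v ≠ 0 := by
      intro h
      apply hH.eigenvectorBasis.orthonormal.ne_zero i
      ext k
      exact congrFun h k
    have h1 : (Γ - b • 1) *ᵥ v = (μ - b) • v := by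
      rw [Matrix.sub_mulVec, hv, Matrix.smul_mulVec, Matrix.one_mulVec, sub_smul]
    have h2 : (Γ - s • 1) *ᵥ ((μ - b) • v) = ((μ - s) * (μ - b)) • v := by
      rw [Matrix.mulVec_smul, Matrix.sub_mulVec, hv, Matrix.smul_mulVec,
        Matrix.one_mulVec, ← sub_smul, smul_smul, mul_comm]
    have h3 : ((μ - s) * (μ - b)) • v = 0 := by
      rw [← h2, ← h1, Matrix.mulVec_mulVec, hquad, Matrix.zero_mulVec]
    have h4 : (μ - s) * (μ - b) = 0 := by
      by_contra h
      exact hv0 (by simpa [h] using smul_eq_zero.mp h3)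
    rcases mul_eq_zero.mp h4 with h | h
    · right; linarith [sub_eq_zero.mp h]
    · left; linarith [sub_eq_zero.mp h]
  have htr : ∑ i, hH.eigenvalues i = ((N:ℝ)-1) * d := by
    have h1 : Γ.trace = ((N:ℝ)-1) * d := by
      have hdiag : ∀ i : Fin (N-1), Γ i i = d := fun i => by rw [hΓ, if_pos rfl]
      simp only [Matrix.trace, Matrix.diag]
      rw [Finset.sum_congr rfl (fun i _ => hdiag i), Finset.sum_const, nsmul_eq_mul,
        Finset.card_univ, hcard]
    have h2 : Γ.trace = ∑ i, hH.eigenvalues i := by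
      conv_lhs => rw [hH.spectral_theorem]
      rw [Unitary.conjStarAlgAut_apply, Matrix.trace_mul_cycle,
        (Matrix.mem_unitaryGroup_iff').mp (hH.eigenvectorUnitary).2, Matrix.one_mul]
      simp [Matrix.trace_diagonal]
    rw [← h2, h1]
  set e := hH.eigenvalues with hedef
  set Sb := Finset.univ.filter (fun i => e i = b) with hSb
  set Ss := Finset.univ.filter (fun i => e i = s) with hSs
  have hdisj : Disjoint Sb Ss := by
    rw [Finset.disjoint_left]
    intro a ha ha'
    rw [hSb, Finset.mem_filter] at ha
    rw [hSs, Finset.mem_filter] at ha'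
    exact hbne (ha.2 ▸ ha'.2 ▸ rfl)
  have hunion : Sb ∪ Ss = Finset.univ := by
    ext i
    simp only [hSb, hSs, Finset.mem_union, Finset.mem_filter, Finset.mem_univ, true_and,
      iff_true]
    exact hev i
  have hcards : Sb.card + Ss.card = N - 1 := by
    rw [← Finset.card_union_of_disjoint hdisj, hunion, Finset.card_univ, Fintype.card_fin]
  have hcR : (Sb.card : ℝ) + (Ss.card : ℝ) = (N:ℝ) - 1 := by
    rw [← Nat.cast_add, hcards, Nat.cast_sub (by omega : 1 ≤ N), Nat.cast_one]
  have hsum : (Sb.card : ℝ) * b + (Ss.card : ℝ) * s = ((N:ℝ)-1) * d := by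
    have h0 : ∑ i, e i = ∑ i ∈ Sb, e i + ∑ i ∈ Ss, e i := by
      rw [← Finset.sum_union hdisj, hunion]
    have h1 : ∑ i ∈ Sb, e i = (Sb.card : ℝ) * b := by
      rw [Finset.sum_congr rfl (fun i hi => (Finset.mem_filter.mp hi).2),
        Finset.sum_const, nsmul_eq_mul]
    have h2 : ∑ i ∈ Ss, e i = (Ss.card : ℝ) * s := by
      rw [Finset.sum_congr rfl (fun i hi => (Finset.mem_filter.mp hi).2),
        Finset.sum_const, nsmul_eq_mul]
    rw [← h1, ← h2, ← h0, hedef, htr]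
  have hkey : ((Sb.card:ℝ) - 1) * (b - s) = 0 := by
    linear_combination hsum - s * hcR + ((N:ℝ)-1) * hsdef + hbs
  have hk1 : Sb.card = 1 := by
    have hbs' : b - s ≠ 0 := sub_ne_zero.mpr hbne
    have : (Sb.card:ℝ) = 1 := by
      rcases mul_eq_zero.mp hkey with h | h
      · linarith [sub_eq_zero.mp h]
      · exact absurd h hbs'
    exact_mod_cast this
  have hk2 : Ss.card = N - 2 := by omega
  refine ⟨hb, hs, hH, hk1, hk2, ?_⟩
  exact hH.posSemidef_iff_eigenvalues_nonneg.mpr (Pi.le_def.mpr fun i => by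
    rw [← hedef, Pi.zero_apply]
    rcases hev i with h | h <;> rw [h] <;> linarith)
end

section
/- For positive integers r and s with 1 ≤ r < s, the following bounds hold: s^{−r} · exp(−r³/(s(s−r)) − r/(2(s−r)) − 1/(144s²)) ≤ (s−r)!/s! ≤ s^{−r} · exp((r² + 1/12)/(s−r) − r/(2s)). -/
set_option maxHeartbeats 1000000 in
lemma ubounds (u : ℝ) (hu : 0 < u) (hu3 : u ≤ 1/3) :
    2*u ≤ Real.log (1+u) - Real.log (1-u) ∧
    Real.log (1+u) - Real.log (1-u) ≤ 2*u + (2/3)*u^3/(1-u^2) := by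
  have h1 : |u| < 1 := by rw [abs_of_pos hu]; linarith
  have h2 : |(-u)| < 1 := by rw [abs_neg]; exact h1
  have A := Real.abs_log_sub_add_sum_range_le h1 6
  have B := Real.abs_log_sub_add_sum_range_le h2 6
  rw [abs_of_pos hu] at A
  rw [abs_neg, abs_of_pos hu] at B
  simp only [Finset.sum_range_succ, Finset.sum_range_zero] at A B
  rw [abs_le] at A B
  obtain ⟨A1, A2⟩ := A
  obtain ⟨B1, B2⟩ := B
  have hsub : 1 - -u = 1 + u := by ring
  rw [hsub] at B1 B2
  norm_num at A1 A2 B1 B2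
  ring_nf at A1 A2 B1 B2
  have h1u : (0:ℝ) < 1 - u := by linarith
  have h1u2 : (0:ℝ) < 1 - u^2 := by nlinarith
  have hd : u^7 * (1-u)⁻¹ ≤ (3/2)*u^7 := by
    rw [← div_eq_mul_inv, div_le_iff₀ h1u]; nlinarith [pow_pos hu 7]
  have hu2 : u^2 ≤ 1/9 := by nlinarith
  have hu4 : u^4 ≤ 1/81 := by nlinarith
  have h73 : u^7 ≤ (1/81)*u^3 := by
    have := mul_le_mul_of_nonneg_left hu4 (le_of_lt (pow_pos hu 3))
    nlinarith
  have h75 : u^7 ≤ (1/9)*u^5 := by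
    have := mul_le_mul_of_nonneg_left hu2 (le_of_lt (pow_pos hu 5))
    nlinarith
  constructor
  · linarith [pow_pos hu 5, pow_pos hu 3]
  · have hfrac : (2/3)*u^3*(1+u^2+u^4) ≤ (2/3)*u^3/(1-u^2) := by
      rw [le_div_iff₀ h1u2]
      have he : (2/3)*u^3*(1+u^2+u^4)*(1-u^2) = (2/3)*u^3 - (2/3)*u^9 := by ring
      rw [he]
      linarith [pow_pos hu 9]
    linarith [pow_pos hu 5]

lemma keybounds (n : ℕ) (hn : 1 ≤ n) :
    1 ≤ ((n:ℝ) + 1/2) * (Real.log ((n:ℝ)+1) - Real.log n) ∧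
    ((n:ℝ) + 1/2) * (Real.log ((n:ℝ)+1) - Real.log n)
      ≤ 1 + (1/(12*(n:ℝ)) - 1/(12*((n:ℝ)+1))) := by
  have hN : (1:ℝ) ≤ (n:ℝ) := by exact_mod_cast hn
  set N : ℝ := (n:ℝ) with hNdef
  have hN0 : 0 < N := by linarith
  have h2N : (0:ℝ) < 2*N+1 := by linarith
  set u : ℝ := 1/(2*N+1) with hu_def
  have hu : 0 < u := by positivity
  have hu3 : u ≤ 1/3 := by
    rw [hu_def, div_le_div_iff₀ h2N (by norm_num)]; linarith
  obtain ⟨hl, hr⟩ := ubounds u hu hu3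
  have e1 : 1 + u = (2*N+2)/(2*N+1) := by rw [hu_def]; field_simp; try ring
  have e2 : 1 - u = (2*N)/(2*N+1) := by rw [hu_def]; field_simp; try ring
  have hlog : Real.log (1+u) - Real.log (1-u) = Real.log (N+1) - Real.log N := by
    rw [e1, e2, Real.log_div (by positivity) (by positivity),
      Real.log_div (by positivity) (by positivity)]
    have e3 : (2*N+2) = 2*(N+1) := by ring
    rw [e3, Real.log_mul two_ne_zero (by positivity),
      Real.log_mul two_ne_zero (ne_of_gt hN0)]
    ring
  rw [hlog] at hl hr
  have hu2ne : (1 : ℝ) - u^2 ≠ 0 := by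
    have : u^2 ≤ 1/9 := by nlinarith
    intro h; nlinarith
  have hhalf : (0:ℝ) ≤ N + 1/2 := by linarith
  constructor
  · have h := mul_le_mul_of_nonneg_left hl hhalf
    have he : (N+1/2)*(2*u) = 1 := by rw [hu_def]; field_simp; try ring
    linarith [he ▸ h]
  · have h := mul_le_mul_of_nonneg_left hr hhalf
    have he : (N+1/2)*(2*u + (2/3)*u^3/(1-u^2)) = 1 + (1/(12*N) - 1/(12*(N+1))) := by
      rw [hu_def]
      have hden : (1:ℝ) - (1/(2*N+1))^2 = (4*N^2+4*N)/(2*N+1)^2 := by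
        field_simp; ring
      rw [hden]
      field_simp
      ring
    linarith [he ▸ h]

noncomputable def gfun (n : ℕ) : ℝ :=
  Real.log (Nat.factorial n) - ((n:ℝ) + 1/2) * Real.log n + n

lemma gstep (n : ℕ) (hn : 1 ≤ n) :
    0 ≤ gfun n - gfun (n+1) ∧
    gfun n - gfun (n+1) ≤ 1/(12*(n:ℝ)) - 1/(12*((n:ℝ)+1)) := by
  have hn0 : (0:ℝ) < (n:ℝ) := by exact_mod_cast hn
  have hfac : Real.log ((Nat.factorial (n+1) : ℕ) : ℝ)
      = Real.log ((n:ℝ)+1) + Real.log ((Nat.factorial n : ℕ) : ℝ) := by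
    rw [Nat.factorial_succ]
    push_cast
    rw [Real.log_mul (by positivity) (by positivity)]
  have key : gfun n - gfun (n+1)
      = ((n:ℝ)+1/2)*(Real.log ((n:ℝ)+1) - Real.log n) - 1 := by
    simp only [gfun]
    rw [hfac]
    push_cast
    ring
  obtain ⟨h1, h2⟩ := keybounds n hn
  rw [key]
  constructor <;> linarith

lemma gtel (m : ℕ) (hm : 1 ≤ m) : ∀ s, m ≤ s →
    0 ≤ gfun m - gfun s ∧ gfun m - gfun s ≤ 1/(12*(m:ℝ)) - 1/(12*(s:ℝ)) := by
  intro s hs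
  induction s, hs using Nat.le_induction with
  | base => constructor <;> simp
  | succ s hs ih =>
    obtain ⟨ih1, ih2⟩ := ih
    obtain ⟨st1, st2⟩ := gstep s (le_trans hm hs)
    constructor
    · linarith
    · push_cast
      push_cast at ih2 st2
      linarith

/-- Lemma 2: falling-factorial bounds. For `1 ≤ r < s`,
`s^{-r} exp(-r³/(s(s-r)) - r/(2(s-r)) - 1/(144 s²)) ≤ (s-r)!/s!
  ≤ s^{-r} exp((r² + 1/12)/(s-r) - r/(2s))`. -/
theorem stmt_19 (r s : ℕ) (hr : 1 ≤ r) (hrs : r < s) :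
    Real.exp (-(r : ℝ)^3 / ((s : ℝ) * ((s : ℝ) - r))
        - (r : ℝ) / (2 * ((s : ℝ) - r)) - 1 / (144 * (s : ℝ)^2)) / (s : ℝ) ^ r
      ≤ (Nat.factorial (s - r) : ℝ) / Nat.factorial s ∧
    (Nat.factorial (s - r) : ℝ) / Nat.factorial s
      ≤ Real.exp (((r : ℝ)^2 + 1/12) / ((s : ℝ) - r) - (r : ℝ) / (2 * s)) / (s : ℝ) ^ r := by
  set m : ℕ := s - r with hmdef
  have hm1 : 1 ≤ m := by omega
  have hms : m < s := by omega
  have hcast : (m:ℝ) = (s:ℝ) - (r:ℝ) := by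
    rw [hmdef, Nat.cast_sub (le_of_lt hrs)]
  set M : ℝ := (m:ℝ) with hMdef
  set S : ℝ := (s:ℝ) with hSdef
  set R : ℝ := (r:ℝ) with hRdef
  have hM1 : (1:ℝ) ≤ M := by rw [hMdef]; exact_mod_cast hm1
  have hMS : M < S := by rw [hMdef, hSdef]; exact_mod_cast hms
  have hR1 : (1:ℝ) ≤ R := by rw [hRdef]; exact_mod_cast hr
  have hM0 : (0:ℝ) < M := by linarith
  have hS0 : (0:ℝ) < S := by linarith
  have hR0 : (0:ℝ) < R := by linarith
  have hRM : R = S - M := by rw [hcast]; ring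
  -- t := log s! - log m!
  set t : ℝ := Real.log ((Nat.factorial s : ℕ) : ℝ)
    - Real.log ((Nat.factorial m : ℕ) : ℝ) with htdef
  obtain ⟨hD1, hD2⟩ := gtel m hm1 s (le_of_lt hms)
  -- express difference
  have hgd : gfun m - gfun s
      = -t - (M+1/2)*Real.log M + (S+1/2)*Real.log S - R := by
    simp only [gfun, htdef, ← hMdef, ← hSdef]
    rw [hRM]; ring
  -- log bounds
  have hlog1 : Real.log S - Real.log M ≤ R / M := by
    have h := Real.log_le_sub_one_of_pos (show (0:ℝ) < S/M by positivity)
    rw [Real.log_div (ne_of_gt hS0) (ne_of_gt hM0)] at h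
    have : S/M - 1 = R/M := by rw [hRM]; field_simp
    linarith [this ▸ h]
  have hlog2 : R / S ≤ Real.log S - Real.log M := by
    have h := Real.log_le_sub_one_of_pos (show (0:ℝ) < M/S by positivity)
    rw [Real.log_div (ne_of_gt hM0) (ne_of_gt hS0)] at h
    have : M/S - 1 = -(R/S) := by rw [hRM]; field_simp; ring
    linarith [this ▸ h]
  -- t expression
  have ht : t = R * Real.log S + (M+1/2)*(Real.log S - Real.log M) - R
      - (gfun m - gfun s) := by
    rw [hgd, hRM]; ring
  have hhalf : (0:ℝ) ≤ M + 1/2 := by linarith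
  have htup : t ≤ R * Real.log S + R/(2*M) := by
    have h := mul_le_mul_of_nonneg_left hlog1 hhalf
    have he : (M+1/2)*(R/M) = R + R/(2*M) := by field_simp
    rw [ht]
    linarith [he ▸ h]
  have htlo : R * Real.log S + R/(2*S) - (R^2 + 1/12)/M ≤ t := by
    have h := mul_le_mul_of_nonneg_left hlog2 hhalf
    have he : (M+1/2)*(R/S) = M*R/S + R/(2*S) := by ring
    have hMRS : M*R/S = R - R^2/S := by
      rw [hRM]; field_simp; ring
    have hdiv : R^2/S ≤ R^2/M :=
      div_le_div_of_nonneg_left (by positivity) hM0 (le_of_lt hMS)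
    have hsplit : (R^2 + 1/12)/M = R^2/M + (1/12)/M := by ring
    rw [ht]
    have h12S : 0 < 1/(12*S) := by positivity
    -- gfun m - gfun s ≤ 1/(12M) - 1/(12S)
    have : (M+1/2)*(Real.log S - Real.log M) ≥ R - R^2/S + R/(2*S) := by
      calc (M+1/2)*(Real.log S - Real.log M) ≥ (M+1/2)*(R/S) := h
        _ = M*R/S + R/(2*S) := he
        _ = R - R^2/S + R/(2*S) := by rw [hMRS]
    have h112 : (1/12)/M = 1/(12*M) := by ring
    nlinarith [hdiv]
  -- convert to exp form
  have hfacm : (0:ℝ) < ((Nat.factorial m : ℕ) : ℝ) := by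
    exact_mod_cast Nat.factorial_pos m
  have hfacs : (0:ℝ) < ((Nat.factorial s : ℕ) : ℝ) := by
    exact_mod_cast Nat.factorial_pos s
  have hratio : ((Nat.factorial m : ℕ) : ℝ) / ((Nat.factorial s : ℕ) : ℝ)
      = Real.exp (-t) := by
    rw [htdef, neg_sub, Real.exp_sub, Real.exp_log hfacm, Real.exp_log hfacs]
  have hSr : (S : ℝ) ^ r = Real.exp (R * Real.log S) := by
    rw [← Real.log_pow, Real.exp_log (pow_pos hS0 r)]
  rw [hmdef] at hratio
  rw [hratio, ← hcast, hSr]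
  constructor
  · rw [div_le_iff₀ (Real.exp_pos _), ← Real.exp_add, Real.exp_le_exp]
    have hpos1 : 0 ≤ R^3/(S*M) := by positivity
    have hpos2 : 0 ≤ 1/(144*S^2) := by positivity
    have eneg : -R^3/(S*M) = -(R^3/(S*M)) := by ring
    rw [eneg]
    linarith
  · rw [le_div_iff₀ (Real.exp_pos _), ← Real.exp_add, Real.exp_le_exp]
    linarith
end
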